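/- arXiv:1808.00768 — 4 statements merged into one kernel-verified Lean document; each statement's English description precedes it below -/
import Mathlib

section
/- Let f ∈ 𝒮(ℝⁿ; Sᵐℝⁿ) and k ≥ 0 an integer. Then for every (x,ξ) ∈ ℝⁿ × (ℝⁿ∖{0}), (Jᵏf)(x,ξ) = |ξ|^{m−2k−1} Σ_{ℓ=0}^{k} (−1)^{k−ℓ} C(k,ℓ) |ξ|^{ℓ} ⟨ξ,x⟩^{k−ℓ} (Iˡf)(x − (⟨ξ,x⟩/|ξ|²)ξ, ξ/|ξ|); in particular the data (J⁰f,…,Jᵐf) is determined by (I⁰f,…,Iᵐf). -/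
/-!
With `r = |ξ|`, `ω = ξ/r` and `s = ⟨ξ,x⟩/r` one has `ξ = rω` and `x = x₀ + sω`, where `x₀` is
the point of the line closest to the origin. Homogeneity in the direction,
`Jᵏf(x, cξ) = c^(m-k-1) Jᵏf(x, ξ)` for `c > 0`, removes `r`; moving the base point along the
line by `s` turns `tᵏ` into `(u - s)ᵏ`, whose binomial expansion gives the moments `Jˡf(x₀, ω)`,
`l ≤ k`.
-/

open MeasureTheory Real
open scoped InnerProductSpace

noncomputable section

abbrev E (n : ℕ) : Type := EuclideanSpace ℝ (Fin n)

/-- The pairing `⟨f(z), ξ^m⟩ = f_{i₁…i_m}(z) ξ^{i₁}⋯ξ^{i_m}`. -/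
def tpair {n m : ℕ} (f : (Fin m → Fin n) → E n → ℂ) (z ξ : E n) : ℂ :=
  ∑ i : Fin m → Fin n, f i z * ∏ j, ((ξ (i j) : ℝ) : ℂ)

/-- The momentum ray transform `(Jᵏf)(x,ξ) = ∫ tᵏ ⟨f(x+tξ), ξᵐ⟩ dt`. -/
def Jmrt {n m : ℕ} (k : ℕ) (f : (Fin m → Fin n) → E n → ℂ) (x ξ : E n) : ℂ :=
  ∫ t : ℝ, (t : ℂ) ^ k * tpair f (x + t • ξ) ξ

/-- `f` is a Schwartz tensor field: each component is a Schwartz function. -/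
def IsSchwartzTF {n m : ℕ} (f : (Fin m → Fin n) → E n → ℂ) : Prop :=
  ∀ i, ∃ g : SchwartzMap (E n) ℂ, ∀ z, g z = f i z

/-- `f` is a symmetric tensor field. -/
def IsSymTF {n m : ℕ} (f : (Fin m → Fin n) → E n → ℂ) : Prop :=
  ∀ (i : Fin m → Fin n) (σ : Equiv.Perm (Fin m)), f (i ∘ σ) = f i

open scoped SchwartzMap

lemma tpair_smul {n m : ℕ} (f : (Fin m → Fin n) → E n → ℂ) (z ξ : E n) (c : ℝ) :
    tpair f z (c • ξ) = (c : ℂ) ^ m * tpair f z ξ := by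
  simp only [tpair, Finset.mul_sum, PiLp.smul_apply, smul_eq_mul, Complex.ofReal_mul,
    Finset.prod_mul_distrib, Finset.prod_const, Finset.card_univ, Fintype.card_fin]
  exact Finset.sum_congr rfl fun _ _ => by ring

lemma SchwartzMap.integrable_pow_mul_comp_line {V : Type*} [NormedAddCommGroup V]
    [NormedSpace ℝ V] (g : 𝓢(V, ℂ)) {x ξ : V} (hξ : ξ ≠ 0) (ℓ : ℕ) :
    Integrable (fun t : ℝ => (t : ℂ) ^ ℓ * g (x + t • ξ)) := by
  have hline : Function.HasTemperateGrowth (fun t : ℝ => x + t • ξ) := by fun_prop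
  have hanti : AntilipschitzWith ‖ξ‖₊⁻¹ (fun t : ℝ => x + t • ξ) := by
    refine AntilipschitzWith.of_le_mul_dist fun s t => ?_
    rw [dist_eq_norm, dist_eq_norm, add_sub_add_left_eq_sub, ← sub_smul, norm_smul,
      NNReal.coe_inv, coe_nnnorm, mul_left_comm, inv_mul_cancel₀ (norm_ne_zero_iff.mpr hξ), mul_one]
  set ψ : 𝓢(ℝ, ℂ) := SchwartzMap.compCLMOfAntilipschitz ℂ hline hanti g
  refine (ψ.integrable_pow_mul volume ℓ).mono'
    ((Complex.continuous_ofReal.pow ℓ).mul ψ.continuous).aestronglyMeasurable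
    (Filter.Eventually.of_forall fun t => ?_)
  simp [ψ]

section MomentumRayTransform

variable {n m k : ℕ} {f : (Fin m → Fin n) → E n → ℂ} {x ξ : E n}

lemma integrable_pow_mul_tpair_line (hf : IsSchwartzTF f) (hξ : ξ ≠ 0) (ℓ : ℕ) :
    Integrable (fun t : ℝ => (t : ℂ) ^ ℓ * tpair f (x + t • ξ) ξ) := by
  simp only [tpair, Finset.mul_sum]
  refine integrable_finsetSum _ fun i _ => ?_
  obtain ⟨g, hg⟩ := hf i
  simpa only [← hg, mul_assoc] using (g.integrable_pow_mul_comp_line hξ ℓ).mul_const _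

lemma Jmrt_smul_right_of_pos {c : ℝ} (hc : 0 < c) :
    Jmrt k f x (c • ξ) = (c : ℂ) ^ ((m : ℤ) - k - 1) * Jmrt k f x ξ := by
  have hc' : (c : ℂ) ≠ 0 := Complex.ofReal_ne_zero.mpr hc.ne'
  have hintegrand : ∀ t : ℝ, (t : ℂ) ^ k * tpair f (x + t • c • ξ) (c • ξ) =
      (c : ℂ) ^ ((m : ℤ) - k) * (((c * t : ℝ) : ℂ) ^ k * tpair f (x + (c * t) • ξ) ξ) := by
    intro t
    rw [tpair_smul, smul_smul, mul_comm t c, zpow_sub₀ hc', zpow_natCast, zpow_natCast]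
    push_cast
    field_simp
    ring
  simp only [Jmrt, hintegrand, integral_const_mul,
    Measure.integral_comp_mul_left (fun u : ℝ => (u : ℂ) ^ k * tpair f (x + u • ξ) ξ) c,
    abs_inv, abs_of_pos hc, Complex.real_smul, zpow_sub₀ hc', zpow_one, Complex.ofReal_inv]
  ring

lemma Jmrt_add_smul (hf : IsSchwartzTF f) (hξ : ξ ≠ 0) (s : ℝ) :
    Jmrt k f (x + s • ξ) ξ =
      ∑ ℓ ∈ Finset.range (k + 1), (k.choose ℓ : ℂ) * (-s : ℂ) ^ (k - ℓ) * Jmrt ℓ f x ξ := by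
  set F : ℝ → ℂ := fun u => ((u : ℂ) + (-s : ℂ)) ^ k * tpair f (x + u • ξ) ξ
  have hexpand : ∀ u : ℝ, F u = ∑ ℓ ∈ Finset.range (k + 1),
      (k.choose ℓ : ℂ) * (-s : ℂ) ^ (k - ℓ) * ((u : ℂ) ^ ℓ * tpair f (x + u • ξ) ξ) := by
    intro u
    simp only [F, add_pow, Finset.sum_mul]
    exact Finset.sum_congr rfl fun _ _ => by ring
  calc Jmrt k f (x + s • ξ) ξ = ∫ t : ℝ, F (t + s) := by
        refine integral_congr_ae (Filter.Eventually.of_forall fun t => ?_)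
        simp only [F, Complex.ofReal_add, add_smul, add_assoc, add_neg_cancel, add_zero,
          add_comm (s • ξ)]
    _ = ∫ u : ℝ, F u := integral_add_right_eq_self (μ := volume) F s
    _ = _ := by
        simp only [hexpand]
        rw [integral_finsetSum _ fun ℓ _ => (integrable_pow_mul_tpair_line hf hξ ℓ).const_mul _]
        simp only [integral_const_mul, Jmrt]

end MomentumRayTransform

theorem stmt2_general {n m : ℕ}
    (f : (Fin m → Fin n) → E n → ℂ) (hf : IsSchwartzTF f)
    (k : ℕ) (x ξ : E n) (hξ : ξ ≠ 0) :
    Jmrt k f x ξ =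
      ((‖ξ‖ ^ ((m : ℤ) - 2 * (k : ℤ) - 1) : ℝ) : ℂ) *
        ∑ ℓ ∈ Finset.range (k + 1),
          (-1 : ℂ) ^ (k - ℓ) * (k.choose ℓ : ℂ) * ((‖ξ‖ ^ ℓ : ℝ) : ℂ) *
            ((⟪ξ, x⟫_ℝ ^ (k - ℓ) : ℝ) : ℂ) *
            Jmrt ℓ f (x - (⟪ξ, x⟫_ℝ / ‖ξ‖ ^ 2) • ξ) (‖ξ‖⁻¹ • ξ) := by
  set r := ‖ξ‖
  set p := ⟪ξ, x⟫_ℝ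
  have hr : 0 < r := norm_pos_iff.mpr hξ
  set ω := r⁻¹ • ξ
  set x₀ := x - (p / r ^ 2) • ξ
  have hω : ω ≠ 0 := smul_ne_zero (inv_ne_zero hr.ne') hξ
  have hξ_eq : ξ = r • ω := (smul_inv_smul₀ hr.ne' ξ).symm
  have hx_eq : x = x₀ + (p / r) • ω := by
    rw [smul_smul, show p / r * r⁻¹ = p / r ^ 2 by ring, sub_add_cancel]
  calc Jmrt k f x ξ = Jmrt k f (x₀ + (p / r) • ω) (r • ω) := by rw [← hx_eq, ← hξ_eq]
    _ = _ := by
      rw [Jmrt_smul_right_of_pos hr, Jmrt_add_smul hf hω, Finset.mul_sum, Finset.mul_sum]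
      refine Finset.sum_congr rfl fun ℓ hℓ => ?_
      obtain ⟨a, rfl⟩ := Nat.exists_eq_add_of_le (Nat.lt_succ_iff.mp (Finset.mem_range.mp hℓ))
      have hrC : (r : ℂ) ≠ 0 := Complex.ofReal_ne_zero.mpr hr.ne'
      have hexp : ((m : ℤ) - ↑(ℓ + a) - 1) = ((m : ℤ) - 2 * ↑(ℓ + a) - 1) + ↑(ℓ + a) := by
        push_cast; ring
      rw [hexp, zpow_add₀ hrC, Nat.add_sub_cancel_left, zpow_natCast]
      push_cast
      rw [neg_pow, div_pow]
      field_simp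
      ring

theorem stmt2 {n m : ℕ} (hn : 2 ≤ n)
    (f : (Fin m → Fin n) → E n → ℂ) (hf : IsSchwartzTF f) (hsym : IsSymTF f)
    (k : ℕ) (x ξ : E n) (hξ : ξ ≠ 0) :
    Jmrt k f x ξ =
      ((‖ξ‖ ^ ((m : ℤ) - 2 * (k : ℤ) - 1) : ℝ) : ℂ) *
        ∑ ℓ ∈ Finset.range (k + 1),
          (-1 : ℂ) ^ (k - ℓ) * (k.choose ℓ : ℂ) * ((‖ξ‖ ^ ℓ : ℝ) : ℂ) *
            ((⟪ξ, x⟫_ℝ ^ (k - ℓ) : ℝ) : ℂ) *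
            Jmrt ℓ f (x - (⟪ξ, x⟫_ℝ / ‖ξ‖ ^ 2) • ξ) (‖ξ‖⁻¹ • ξ) :=
  stmt2_general f hf k x ξ hξ
end
end

section
/- Let f ∈ 𝒮(ℝⁿ; Sᵐℝⁿ), a ∈ ℝⁿ, and define the shifted field f_a by f_a(x) = f(x+a). Then for every integer k ≥ 0 and every (x,ξ) ∈ T𝕊^{n−1}, (Iᵏf_a)(x,ξ) = Σ_{ℓ=0}^{k} (−1)^{k−ℓ} C(k,ℓ) ⟨a,ξ⟩^{k−ℓ} (Iˡf)(x + a − ⟨a,ξ⟩ξ, ξ). -/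
open MeasureTheory Real
open scoped InnerProductSpace

noncomputable section

lemma line_tg {n : ℕ} (y ξ : E n) : Function.HasTemperateGrowth (fun s : ℝ => y + s • ξ) := by
  apply Function.HasTemperateGrowth.of_fderiv (k := 1) (C := ‖y‖ + ‖ξ‖)
  · have : (fderiv ℝ (fun s : ℝ => y + s • ξ)) = fun _ => (1 : ℝ →L[ℝ] ℝ).smulRight ξ := by
      ext1 s
      exact (((hasFDerivAt_id s).smul_const ξ).const_add y).fderiv
    rw [this]
    exact Function.HasTemperateGrowth.const _
  · exact (differentiable_id.smul_const ξ).const_add y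
  · intro s
    calc ‖y + s • ξ‖ ≤ ‖y‖ + ‖s • ξ‖ := norm_add_le _ _
      _ = ‖y‖ + |s| * ‖ξ‖ := by rw [norm_smul, Real.norm_eq_abs]
      _ ≤ (‖y‖ + ‖ξ‖) * (1 + ‖s‖) ^ 1 := by
          rw [Real.norm_eq_abs, pow_one]
          nlinarith [abs_nonneg s, norm_nonneg y, norm_nonneg ξ]

lemma integrable_pow_schwartz_line {n : ℕ} (g : SchwartzMap (E n) ℂ) (y ξ : E n)
    (hξ : ‖ξ‖ = 1) (ℓ : ℕ) :
    Integrable (fun s : ℝ => (s : ℂ) ^ ℓ * g (y + s • ξ)) := by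
  have hup : ∃ (k : ℕ) (C : ℝ), ∀ s : ℝ, ‖s‖ ≤ C * (1 + ‖y + s • ξ‖) ^ k := by
    refine ⟨1, 1 + ‖y‖, fun s => ?_⟩
    have h1 : ‖s‖ = ‖s • ξ‖ := by rw [norm_smul, hξ, mul_one]
    have h2 : ‖s • ξ‖ ≤ ‖y + s • ξ‖ + ‖y‖ := by
      have := norm_sub_le (y + s • ξ) y
      simpa using this
    have hy : (0:ℝ) ≤ ‖y‖ := norm_nonneg _
    have hz : (0:ℝ) ≤ ‖y + s • ξ‖ := norm_nonneg _
    rw [h1, pow_one]; nlinarith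
  set G : SchwartzMap ℝ ℂ := SchwartzMap.compCLM (𝕜 := ℝ) (line_tg y ξ) hup g
  have hG : ∀ s : ℝ, G s = g (y + s • ξ) := fun s => rfl
  have hi : Integrable (fun s : ℝ => ‖s‖ ^ ℓ * ‖G s‖) := G.integrable_pow_mul volume ℓ
  refine hi.mono' ?_ ?_
  · exact (Continuous.mul (by fun_prop) (g.continuous.comp (by fun_prop))).aestronglyMeasurable
  · filter_upwards with s
    rw [norm_mul, norm_pow, Complex.norm_real, ← hG s]

lemma integrable_pow_tpair_line {n m : ℕ} (f : (Fin m → Fin n) → E n → ℂ)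
    (hf : IsSchwartzTF f) (y ξ : E n) (hξ : ‖ξ‖ = 1) (ℓ : ℕ) :
    Integrable (fun s : ℝ => (s : ℂ) ^ ℓ * tpair f (y + s • ξ) ξ) := by
  have : (fun s : ℝ => (s : ℂ) ^ ℓ * tpair f (y + s • ξ) ξ) =
      fun s : ℝ => ∑ i : Fin m → Fin n,
        ((s : ℂ) ^ ℓ * f i (y + s • ξ)) * ∏ j, ((ξ (i j) : ℝ) : ℂ) := by
    ext s
    rw [tpair, Finset.mul_sum]
    congr 1; ext i; ring
  rw [this]
  apply integrable_finset_sum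
  intro i _
  obtain ⟨g, hg⟩ := hf i
  have : (fun s : ℝ => ((s : ℂ) ^ ℓ * f i (y + s • ξ)) * ∏ j, ((ξ (i j) : ℝ) : ℂ)) =
      fun s : ℝ => ((s : ℂ) ^ ℓ * g (y + s • ξ)) * ∏ j, ((ξ (i j) : ℝ) : ℂ) := by
    ext s; rw [hg]
  rw [this]
  exact (integrable_pow_schwartz_line g y ξ hξ ℓ).mul_const _

theorem stmt4 {n m : ℕ} (hn : 2 ≤ n)
    (f : (Fin m → Fin n) → E n → ℂ) (hf : IsSchwartzTF f) (hsym : IsSymTF f)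
    (a : E n) (k : ℕ) (x ξ : E n) (hξ : ‖ξ‖ = 1) (hxξ : ⟪x, ξ⟫_ℝ = 0) :
    Jmrt k (fun i z => f i (z + a)) x ξ =
      ∑ ℓ ∈ Finset.range (k + 1),
        (-1 : ℂ) ^ (k - ℓ) * (k.choose ℓ : ℂ) * ((⟪a, ξ⟫_ℝ : ℝ) : ℂ) ^ (k - ℓ) *
          Jmrt ℓ f (x + a - ⟪a, ξ⟫_ℝ • ξ) ξ := by
  set c : ℝ := ⟪a, ξ⟫_ℝ with hc
  set y : E n := x + a - c • ξ with hy
  set F : ℝ → ℂ := fun s => ((s : ℂ) - (c : ℂ)) ^ k * tpair f (y + s • ξ) ξ with hF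
  have key : ∀ t : ℝ, x + t • ξ + a = y + (t + c) • ξ := by
    intro t
    rw [hy, add_smul]
    abel
  have step1 : Jmrt k (fun i z => f i (z + a)) x ξ = ∫ t : ℝ, F (t + c) := by
    rw [Jmrt]
    congr 1
    ext t
    have h1 : tpair (fun i z => f i (z + a)) (x + t • ξ) ξ = tpair f (x + t • ξ + a) ξ := rfl
    rw [h1, key t, hF]
    push_cast
    ring_nf
  rw [step1, integral_add_right_eq_self F c]
  have expand : ∀ s : ℝ, F s = ∑ ℓ ∈ Finset.range (k + 1),
      ((-1 : ℂ) ^ (k - ℓ) * (k.choose ℓ : ℂ) * (c : ℂ) ^ (k - ℓ)) *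
        ((s : ℂ) ^ ℓ * tpair f (y + s • ξ) ξ) := by
    intro s
    show ((s : ℂ) - (c : ℂ)) ^ k * tpair f (y + s • ξ) ξ = _
    rw [sub_pow, Finset.sum_mul]
    apply Finset.sum_congr rfl
    intro ℓ hℓ
    rw [Finset.mem_range] at hℓ
    have : ((-1 : ℂ)) ^ (ℓ + k) = (-1 : ℂ) ^ (k - ℓ) := by
      rw [show ℓ + k = (k - ℓ) + 2 * ℓ by omega, pow_add]
      simp [pow_mul]
    rw [this]; ring
  rw [MeasureTheory.integral_congr_ae (Filter.Eventually.of_forall expand),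
    integral_finset_sum _ (fun ℓ _ =>
      ((integrable_pow_tpair_line f hf y ξ hξ ℓ).const_mul _))]
  apply Finset.sum_congr rfl
  intro ℓ _
  rw [integral_const_mul]
  rfl
end
end

section
/- (Lemma 4.1, commutation relations.) The operators X_i and Ξ_i on C^∞(T𝕊^{n−1}) satisfy: [X_i, X_j] = 0, [Ξ_i, Ξ_j] = x_i X_j − x_j X_i + ξ_i Ξ_j − ξ_j Ξ_i, and [X_i, Ξ_j] = ξ_i X_j, for all 1 ≤ i, j ≤ n. -/
open MeasureTheory Real
open scoped InnerProductSpace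

noncomputable section

/-- The vector field `X̃_i = ∂/∂x^i − ξ_i ξ^p ∂/∂x^p` acting on functions on
`ℝⁿ × (ℝⁿ∖{0})` (derivative in the direction `(e_i − ξ_i ξ, 0)`). -/
def tildeX {n : ℕ} {F : Type*} [NormedAddCommGroup F] [NormedSpace ℝ F]
    (i : Fin n) (ψ : E n × E n → F) (p : E n × E n) : F :=
  fderiv ℝ ψ p ((EuclideanSpace.single i 1 : E n) - p.2 i • p.2, (0 : E n))

/-- The vector field `Ξ̃_i = ∂/∂ξ^i − x_i ξ^p ∂/∂x^p − ξ_i ξ^p ∂/∂ξ^p`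
(derivative in the direction `(−x_i ξ, e_i − ξ_i ξ)`). -/
def tildeXi {n : ℕ} {F : Type*} [NormedAddCommGroup F] [NormedSpace ℝ F]
    (i : Fin n) (ψ : E n × E n → F) (p : E n × E n) : F :=
  fderiv ℝ ψ p (-(p.1 i) • p.2, (EuclideanSpace.single i 1 : E n) - p.2 i • p.2)

/-- The canonical extension of a function on `T𝕊^{n-1}` to `ℝⁿ × (ℝⁿ∖{0})`:
`ψ(x,ξ) = φ(x − (⟨ξ,x⟩/|ξ|²)ξ, ξ/|ξ|)`. -/
def extendTS {n : ℕ} (φ : E n → E n → ℂ) : E n × E n → ℂ :=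
  fun p => φ (p.1 - (⟪p.2, p.1⟫_ℝ / ‖p.2‖ ^ 2) • p.2) (‖p.2‖⁻¹ • p.2)

/-- The operator `X_i` on functions on `T𝕊^{n-1}`: the restriction of `X̃_i`
(applied to any smooth extension; here to the canonical one). -/
def Xop {n : ℕ} (i : Fin n) (φ : E n → E n → ℂ) (x ξ : E n) : ℂ :=
  tildeX i (extendTS φ) (x, ξ)

/-- The operator `Ξ_i` on functions on `T𝕊^{n-1}`: the restriction of `Ξ̃_i`. -/
def Ξop {n : ℕ} (i : Fin n) (φ : E n → E n → ℂ) (x ξ : E n) : ℂ :=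
  tildeXi i (extendTS φ) (x, ξ)

/-- `φ` represents a smooth function on `T𝕊^{n-1}`: its canonical extension is smooth
away from `ξ = 0`. -/
def SmoothOnTS {n : ℕ} (φ : E n → E n → ℂ) : Prop :=
  ContDiffOn ℝ (⊤ : ℕ∞) (extendTS φ) {p : E n × E n | p.2 ≠ 0}

/-- `φ` belongs to the Schwartz space `𝒮(T𝕊^{n-1})`: its canonical extension is smooth away
from `ξ = 0` and all its derivatives decay rapidly in `x` on `T𝕊^{n-1}`. -/
def SchwartzOnTS {n : ℕ} (φ : E n → E n → ℂ) : Prop :=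
  SmoothOnTS φ ∧
    ∀ k N : ℕ, ∃ C : ℝ, ∀ x ξ : E n, ‖ξ‖ = 1 → ⟪x, ξ⟫_ℝ = 0 →
      (1 + ‖x‖) ^ N * ‖iteratedFDeriv ℝ k (extendTS φ) (x, ξ)‖ ≤ C

def retr (n : ℕ) : E n × E n → E n × E n :=
  fun p => (p.1 - (⟪p.2, p.1⟫_ℝ / ‖p.2‖ ^ 2) • p.2, ‖p.2‖⁻¹ • p.2)

lemma retr_fix {n : ℕ} (x ξ : E n) (hξ : ‖ξ‖ = 1) (hxξ : ⟪x, ξ⟫_ℝ = 0) :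
    retr n (x, ξ) = (x, ξ) := by
  have h : ⟪ξ, x⟫_ℝ = 0 := by rw [real_inner_comm]; exact hxξ
  show (x - (⟪ξ, x⟫_ℝ / ‖ξ‖ ^ 2) • ξ, ‖ξ‖⁻¹ • ξ) = (x, ξ)
  rw [h, hξ]; norm_num

lemma hasFDerivAt_retr {n : ℕ} (x ξ : E n) (hξ : ‖ξ‖ = 1) (hxξ : ⟪x, ξ⟫_ℝ = 0) :
    ∃ L : (E n × E n) →L[ℝ] E n × E n, HasFDerivAt (retr n) L (x, ξ) ∧
      ∀ u : E n × E n, ⟪ξ, u.2⟫_ℝ = 0 → ⟪ξ, u.1⟫_ℝ + ⟪u.2, x⟫_ℝ = 0 → L u = u := by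
  have hξx : ⟪ξ, x⟫_ℝ = 0 := by rw [real_inner_comm]; exact hxξ
  have hq1 : ‖((x, ξ) : E n × E n).2‖ = 1 := hξ
  have hfst := hasFDerivAt_fst (𝕜 := ℝ) (p := ((x, ξ) : E n × E n))
  have hsnd := hasFDerivAt_snd (𝕜 := ℝ) (p := ((x, ξ) : E n × E n))
  have hs : HasFDerivAt (fun p : E n × E n => ⟪p.2, p.1⟫_ℝ) _ (x, ξ) := hsnd.inner ℝ hfst
  have hq : HasFDerivAt (fun p : E n × E n => ‖p.2‖ ^ 2) _ (x, ξ) := hsnd.norm_sq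
  have hqinv : HasFDerivAt (fun p : E n × E n => (‖p.2‖ ^ 2)⁻¹) _ (x, ξ) :=
    (hasDerivAt_inv (x := ‖ξ‖^2) (by simp [hξ])).comp_hasFDerivAt ((x,ξ)) hq
  have hmul := hs.mul hqinv
  have hsm := hmul.smul hsnd
  have hfirst := hfst.sub hsm
  have hsqrt : HasDerivAt (fun t : ℝ => (Real.sqrt t)⁻¹) (-(1 / (2 * Real.sqrt (‖ξ‖^2))) / (Real.sqrt (‖ξ‖^2))^2) (‖ξ‖^2) :=
    (Real.hasDerivAt_sqrt (x := ‖ξ‖^2) (by simp [hξ])).inv (by simp [hξ])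
  have heq : ((fun t : ℝ => (Real.sqrt t)⁻¹) ∘ (fun p : E n × E n => ‖p.2‖ ^ 2)) =
      fun p : E n × E n => ‖p.2‖⁻¹ := by
    funext p; simp only [Function.comp_apply, Real.sqrt_sq (norm_nonneg _)]
  have hninv := heq ▸ hsqrt.comp_hasFDerivAt ((x,ξ)) hq
  have hsecond := hninv.smul hsnd
  have hr := hfirst.prodMk hsecond
  have hret : retr n = (fun p : E n × E n =>
      (p.1 - (⟪p.2, p.1⟫_ℝ * (‖p.2‖ ^ 2)⁻¹) • p.2, ‖p.2‖⁻¹ • p.2)) := by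
    funext p; simp [retr, div_eq_mul_inv]
  replace hr := hr.congr_of_eventuallyEq (Filter.Eventually.of_forall (fun p => congrFun hret p))
  refine ⟨_, hr, ?_⟩
  rintro ⟨a, b⟩ h1 h2
  simp only [ContinuousLinearMap.prod_apply, ContinuousLinearMap.coe_sub', Pi.sub_apply,
    ContinuousLinearMap.add_apply, ContinuousLinearMap.coe_smul', Pi.smul_apply,
    ContinuousLinearMap.smulRight_apply, ContinuousLinearMap.coe_comp', Function.comp_apply,
    ContinuousLinearMap.coe_fst', ContinuousLinearMap.coe_snd', fderivInnerCLM_apply,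
    innerSL_apply_apply, smul_eq_mul]
  simp only at h1 h2
  rw [hξx, h1, h2]
  simp [hξ, hξx]

lemma hasFDerivAt_VX {n : ℕ} (k : Fin n) (z : E n × E n) :
    ∃ L : (E n × E n) →L[ℝ] E n × E n,
      HasFDerivAt (fun p : E n × E n =>
        (((EuclideanSpace.single k 1 : E n) - p.2 k • p.2, (0 : E n)) : E n × E n)) L z ∧
      ∀ u : E n × E n, L u = (-(u.2 k) • z.2 - z.2 k • u.2, (0 : E n)) := by
  have hco : HasFDerivAt (fun p : E n × E n => p.2 k)
      ((EuclideanSpace.proj k).comp (ContinuousLinearMap.snd ℝ (E n) (E n))) z :=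
    ((EuclideanSpace.proj k).comp (ContinuousLinearMap.snd ℝ (E n) (E n))).hasFDerivAt
  have h2 := hco.smul (hasFDerivAt_snd (𝕜 := ℝ) (p := z))
  have h3 := (hasFDerivAt_const (𝕜 := ℝ) (EuclideanSpace.single k 1 : E n) z).sub h2
  have h4 := h3.prodMk (hasFDerivAt_const (𝕜 := ℝ) (0 : E n) z)
  refine ⟨_, h4, ?_⟩
  rintro ⟨a, b⟩
  simp only [ContinuousLinearMap.prod_apply, ContinuousLinearMap.coe_sub', Pi.sub_apply,
    ContinuousLinearMap.add_apply, ContinuousLinearMap.coe_smul', Pi.smul_apply,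
    ContinuousLinearMap.smulRight_apply, ContinuousLinearMap.coe_comp', Function.comp_apply,
    ContinuousLinearMap.coe_fst', ContinuousLinearMap.coe_snd', ContinuousLinearMap.zero_apply,
    PiLp.proj_apply, smul_eq_mul, Prod.mk.injEq]
  exact ⟨by module, trivial⟩

lemma hasFDerivAt_VXi {n : ℕ} (k : Fin n) (z : E n × E n) :
    ∃ L : (E n × E n) →L[ℝ] E n × E n,
      HasFDerivAt (fun p : E n × E n =>
        ((-(p.1 k) • p.2, (EuclideanSpace.single k 1 : E n) - p.2 k • p.2) : E n × E n)) L z ∧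
      ∀ u : E n × E n,
        L u = (-(u.1 k) • z.2 - z.1 k • u.2, -(u.2 k) • z.2 - z.2 k • u.2) := by
  have hco : HasFDerivAt (fun p : E n × E n => p.2 k)
      ((EuclideanSpace.proj k).comp (ContinuousLinearMap.snd ℝ (E n) (E n))) z :=
    ((EuclideanSpace.proj k).comp (ContinuousLinearMap.snd ℝ (E n) (E n))).hasFDerivAt
  have hco1 : HasFDerivAt (fun p : E n × E n => -(p.1 k))
      (-((EuclideanSpace.proj k).comp (ContinuousLinearMap.fst ℝ (E n) (E n)))) z :=
    (((EuclideanSpace.proj k).comp (ContinuousLinearMap.fst ℝ (E n) (E n))).hasFDerivAt).neg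
  have h2 := hco.smul (hasFDerivAt_snd (𝕜 := ℝ) (p := z))
  have h3 := (hasFDerivAt_const (𝕜 := ℝ) (EuclideanSpace.single k 1 : E n) z).sub h2
  have h1 := hco1.smul (hasFDerivAt_snd (𝕜 := ℝ) (p := z))
  have h4 := h1.prodMk h3
  refine ⟨_, h4, ?_⟩
  rintro ⟨a, b⟩
  simp only [ContinuousLinearMap.prod_apply, ContinuousLinearMap.coe_sub', Pi.sub_apply,
    ContinuousLinearMap.add_apply, ContinuousLinearMap.coe_smul', Pi.smul_apply,
    ContinuousLinearMap.smulRight_apply, ContinuousLinearMap.coe_comp', Function.comp_apply,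
    ContinuousLinearMap.coe_fst', ContinuousLinearMap.coe_snd', ContinuousLinearMap.zero_apply,
    ContinuousLinearMap.neg_apply, PiLp.proj_apply, smul_eq_mul, Prod.mk.injEq]
  constructor <;> module

set_option maxHeartbeats 2000000 in
theorem stmt8 {n : ℕ} (hn : 2 ≤ n) (φ : E n → E n → ℂ) (hφ : SmoothOnTS φ)
    (i j : Fin n) (x ξ : E n) (hξ : ‖ξ‖ = 1) (hxξ : ⟪x, ξ⟫_ℝ = 0) :
    (Xop i (Xop j φ) x ξ - Xop j (Xop i φ) x ξ = 0) ∧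
    (Ξop i (Ξop j φ) x ξ - Ξop j (Ξop i φ) x ξ =
      ((x i : ℝ) : ℂ) * Xop j φ x ξ - ((x j : ℝ) : ℂ) * Xop i φ x ξ +
        ((ξ i : ℝ) : ℂ) * Ξop j φ x ξ - ((ξ j : ℝ) : ℂ) * Ξop i φ x ξ) ∧
    (Xop i (Ξop j φ) x ξ - Ξop j (Xop i φ) x ξ = ((ξ i : ℝ) : ℂ) * Xop j φ x ξ) := by
  classical
  have hξx : ⟪ξ, x⟫_ℝ = 0 := by rw [real_inner_comm]; exact hxξ
  have hξ0 : ξ ≠ 0 := by intro h; rw [h, norm_zero] at hξ; norm_num at hξ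
  set ψ := extendTS φ with hψdef
  have hUo : IsOpen {p : E n × E n | p.2 ≠ 0} :=
    isOpen_compl_singleton.preimage continuous_snd
  have hmem : {p : E n × E n | p.2 ≠ 0} ∈ nhds ((x, ξ) : E n × E n) :=
    hUo.mem_nhds hξ0
  have hψtop : ContDiffAt ℝ (⊤ : ℕ∞) ψ (x, ξ) := hφ.contDiffAt hmem
  have hD1 : ContDiffAt ℝ 1 (fderiv ℝ ψ) (x, ξ) := hψtop.fderiv_right (WithTop.coe_le_coe.mpr le_top)
  have hD' : HasFDerivAt (fderiv ℝ ψ) (fderiv ℝ (fderiv ℝ ψ) (x, ξ)) (x, ξ) :=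
    (hD1.differentiableAt one_ne_zero).hasFDerivAt
  set Dψ := fderiv ℝ ψ (x, ξ) with hDψdef
  set f'' := fderiv ℝ (fderiv ℝ ψ) (x, ξ) with hf''def
  have hsymm : ∀ v w : E n × E n, f'' v w = f'' w v := by
    intro v w
    refine second_derivative_symmetric_of_eventually (f := ψ) ?_ hD' v w
    filter_upwards [hmem] with y hy
    exact ((hφ.contDiffAt (hUo.mem_nhds hy)).differentiableAt (by simp)).hasFDerivAt
  obtain ⟨LR, hLR, hLRval⟩ := hasFDerivAt_retr x ξ hξ hxξ
  have hfix : retr n (x, ξ) = (x, ξ) := retr_fix x ξ hξ hxξ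
  have hchain : ∀ (V : E n × E n → E n × E n) (LV : (E n × E n) →L[ℝ] E n × E n),
      HasFDerivAt V LV (x, ξ) → ∀ u : E n × E n,
      ⟪ξ, u.2⟫_ℝ = 0 → ⟪ξ, u.1⟫_ℝ + ⟪u.2, x⟫_ℝ = 0 →
      fderiv ℝ ((fun p => fderiv ℝ ψ p (V p)) ∘ retr n) (x, ξ) u
        = f'' u (V (x, ξ)) + Dψ (LV u) := by
    intro V LV hV u hu1 hu2
    have hT : HasFDerivAt (fun p => fderiv ℝ ψ p (V p))
        ((fderiv ℝ ψ (x, ξ)).comp LV + f''.flip (V (x, ξ))) (x, ξ) := hD'.clm_apply hV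
    rw [fderiv_comp (x := (x, ξ)) (by rw [hfix]; exact hT.differentiableAt) hLR.differentiableAt,
      ContinuousLinearMap.comp_apply, hLR.fderiv, hLRval u hu1 hu2, hfix, hT.fderiv,
      ContinuousLinearMap.add_apply, ContinuousLinearMap.comp_apply,
      ContinuousLinearMap.flip_apply]
    exact add_comm _ _
  -- inner product facts
  have t1 : ∀ k : Fin n, ⟪ξ, (EuclideanSpace.single k 1 : E n)⟫_ℝ = ξ k := by
    intro k
    rw [real_inner_comm, EuclideanSpace.inner_single_left]
    simp
  have t2 : ∀ k : Fin n, ⟪ξ, ξ k • ξ⟫_ℝ = ξ k := by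
    intro k
    rw [real_inner_smul_right, real_inner_self_eq_norm_sq, hξ]
    ring
  have tv : ∀ k : Fin n, ⟪ξ, (EuclideanSpace.single k 1 : E n) - ξ k • ξ⟫_ℝ = 0 := by
    intro k; rw [inner_sub_right, t1, t2, sub_self]
  have tw : ∀ k : Fin n,
      ⟪ξ, -(x k) • ξ⟫_ℝ + ⟪(EuclideanSpace.single k 1 : E n) - ξ k • ξ, x⟫_ℝ = 0 := by
    intro k
    rw [real_inner_smul_right, real_inner_self_eq_norm_sq, hξ, inner_sub_left,
      real_inner_smul_left, EuclideanSpace.inner_single_left, hξx]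
    simp
  -- the four second-order values
  have hXX : ∀ k l : Fin n, Xop k (Xop l φ) x ξ =
      f'' ((EuclideanSpace.single k 1 : E n) - ξ k • ξ, (0 : E n))
        ((EuclideanSpace.single l 1 : E n) - ξ l • ξ, (0 : E n)) := by
    intro k l
    obtain ⟨LV, hLV, hLVval⟩ := hasFDerivAt_VX l (x, ξ)
    have h := hchain _ _ hLV
      ((EuclideanSpace.single k 1 : E n) - ξ k • ξ, (0 : E n))
      (by simpa using inner_zero_right (𝕜 := ℝ) ξ) (by simpa using tv k)
    rw [show Xop k (Xop l φ) x ξ = fderiv ℝ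
        ((fun p : E n × E n => fderiv ℝ ψ p
          (((EuclideanSpace.single l 1 : E n) - p.2 l • p.2, (0 : E n)))) ∘ retr n) (x, ξ)
        ((EuclideanSpace.single k 1 : E n) - ξ k • ξ, (0 : E n)) from rfl, h, hLVval]
    simp [Prod.mk_zero_zero]
  have hXXi : ∀ k l : Fin n, Xop k (Ξop l φ) x ξ =
      f'' ((EuclideanSpace.single k 1 : E n) - ξ k • ξ, (0 : E n))
        (-(x l) • ξ, (EuclideanSpace.single l 1 : E n) - ξ l • ξ)
      + Dψ (-(((EuclideanSpace.single k 1 : E n) - ξ k • ξ) l) • ξ, (0 : E n)) := by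
    intro k l
    obtain ⟨LV, hLV, hLVval⟩ := hasFDerivAt_VXi l (x, ξ)
    have h := hchain _ _ hLV
      ((EuclideanSpace.single k 1 : E n) - ξ k • ξ, (0 : E n))
      (by simpa using inner_zero_right (𝕜 := ℝ) ξ) (by simpa using tv k)
    rw [show Xop k (Ξop l φ) x ξ = fderiv ℝ
        ((fun p : E n × E n => fderiv ℝ ψ p
          ((-(p.1 l) • p.2, (EuclideanSpace.single l 1 : E n) - p.2 l • p.2))) ∘ retr n) (x, ξ)
        ((EuclideanSpace.single k 1 : E n) - ξ k • ξ, (0 : E n)) from rfl, h, hLVval]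
    congr 2 <;> simp
  have hXiX : ∀ k l : Fin n, Ξop l (Xop k φ) x ξ =
      f'' (-(x l) • ξ, (EuclideanSpace.single l 1 : E n) - ξ l • ξ)
        ((EuclideanSpace.single k 1 : E n) - ξ k • ξ, (0 : E n))
      + Dψ (-(((EuclideanSpace.single l 1 : E n) - ξ l • ξ) k) • ξ
            - ξ k • ((EuclideanSpace.single l 1 : E n) - ξ l • ξ), (0 : E n)) := by
    intro k l
    obtain ⟨LV, hLV, hLVval⟩ := hasFDerivAt_VX k (x, ξ)
    have h := hchain _ _ hLV
      (-(x l) • ξ, (EuclideanSpace.single l 1 : E n) - ξ l • ξ)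
      (by simpa using tv l) (by simpa using tw l)
    rw [show Ξop l (Xop k φ) x ξ = fderiv ℝ
        ((fun p : E n × E n => fderiv ℝ ψ p
          (((EuclideanSpace.single k 1 : E n) - p.2 k • p.2, (0 : E n)))) ∘ retr n) (x, ξ)
        (-(x l) • ξ, (EuclideanSpace.single l 1 : E n) - ξ l • ξ) from rfl, h, hLVval]
  have hXiXi : ∀ k l : Fin n, Ξop k (Ξop l φ) x ξ =
      f'' (-(x k) • ξ, (EuclideanSpace.single k 1 : E n) - ξ k • ξ)
        (-(x l) • ξ, (EuclideanSpace.single l 1 : E n) - ξ l • ξ)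
      + Dψ ((x k * ξ l) • ξ - x l • ((EuclideanSpace.single k 1 : E n) - ξ k • ξ),
            -(((EuclideanSpace.single k 1 : E n) - ξ k • ξ) l) • ξ
            - ξ l • ((EuclideanSpace.single k 1 : E n) - ξ k • ξ)) := by
    intro k l
    obtain ⟨LV, hLV, hLVval⟩ := hasFDerivAt_VXi l (x, ξ)
    have h := hchain _ _ hLV
      (-(x k) • ξ, (EuclideanSpace.single k 1 : E n) - ξ k • ξ)
      (by simpa using tv k) (by simpa using tw k)
    rw [show Ξop k (Ξop l φ) x ξ = fderiv ℝ
        ((fun p : E n × E n => fderiv ℝ ψ p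
          ((-(p.1 l) • p.2, (EuclideanSpace.single l 1 : E n) - p.2 l • p.2))) ∘ retr n) (x, ξ)
        (-(x k) • ξ, (EuclideanSpace.single k 1 : E n) - ξ k • ξ) from rfl, h, hLVval]
    congr 2 <;> simp
  -- base values
  have hXval : ∀ k : Fin n, Xop k φ x ξ =
      Dψ ((EuclideanSpace.single k 1 : E n) - ξ k • ξ, (0 : E n)) := fun k => rfl
  have hXival : ∀ k : Fin n, Ξop k φ x ξ =
      Dψ (-(x k) • ξ, (EuclideanSpace.single k 1 : E n) - ξ k • ξ) := fun k => rfl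
  have hv : ∀ k l : Fin n, ((EuclideanSpace.single k 1 : E n) - ξ k • ξ) l
      = ((EuclideanSpace.single l 1 : E n) - ξ l • ξ) k := by
    intro k l
    simp [EuclideanSpace.single_apply]
    rw [mul_comm]
    congr 1
    simp [eq_comm]
  refine ⟨?_, ?_, ?_⟩
  · rw [hXX i j, hXX j i, hsymm]; exact sub_self _
  · rw [hXiXi i j, hXiXi j i,
      hsymm (-(x j) • ξ, (EuclideanSpace.single j 1 : E n) - ξ j • ξ)
        (-(x i) • ξ, (EuclideanSpace.single i 1 : E n) - ξ i • ξ),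
      add_sub_add_left_eq_sub, hXval, hXval, hXival, hXival,
      ← Complex.real_smul, ← Complex.real_smul, ← Complex.real_smul, ← Complex.real_smul,
      ← _root_.map_smul, ← _root_.map_smul, ← _root_.map_smul, ← _root_.map_smul,
      ← _root_.map_sub, ← _root_.map_sub, ← _root_.map_add, ← _root_.map_sub]
    congr 1
    rw [hv i j, Prod.ext_iff]
    constructor <;> simp <;> module
  · rw [hXXi i j, hXiX i j,
      hsymm (-(x j) • ξ, (EuclideanSpace.single j 1 : E n) - ξ j • ξ)
        ((EuclideanSpace.single i 1 : E n) - ξ i • ξ, (0 : E n)),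
      add_sub_add_left_eq_sub, hXval,
      ← Complex.real_smul, ← _root_.map_smul, ← _root_.map_sub]
    congr 1
    rw [hv i j, Prod.ext_iff]
    constructor <;> simp <;> module
end
end

section
/- (Lemma 4.1, spanning part.) At every point (x,ξ) ∈ T𝕊^{n−1}: (i) ξ^i X_i(x,ξ) = 0 and ξ^i Ξ_i(x,ξ) = 0; (ii) the 2n vectors X_i(x,ξ), Ξ_i(x,ξ) (1 ≤ i ≤ n) span the tangent space T_{(x,ξ)}(T𝕊^{n−1}); and (iii) every linear relation α^i X_i(x,ξ) + β^i Ξ_i(x,ξ) = 0 has α^i = α₀ ξ^i and β^i = β₀ ξ^i for some scalars α₀, β₀, i.e. every linear dependence among these vectors is a consequence of (i). -/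
open MeasureTheory Real
open scoped InnerProductSpace

noncomputable section

/-- The tangent vector to `T𝕊^{n-1}` at `(x,ξ)` representing `X_i`: `(e_i − ξ_i ξ, 0)`. -/
def Xvec {n : ℕ} (i : Fin n) (x ξ : E n) : E n × E n :=
  ((EuclideanSpace.single i 1 : E n) - ξ i • ξ, (0 : E n))

/-- The tangent vector to `T𝕊^{n-1}` at `(x,ξ)` representing `Ξ_i`: `(−x_i ξ, e_i − ξ_i ξ)`. -/
def Ξvec {n : ℕ} (i : Fin n) (x ξ : E n) : E n × E n :=
  (-(x i) • ξ, (EuclideanSpace.single i 1 : E n) - ξ i • ξ)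

/-!
Expanding in the standard basis, `α^i X_i + β^i Ξ_i = (α − (⟨ξ,α⟩ + ⟨x,β⟩) ξ, β − ⟨ξ,β⟩ ξ)`.
Everything follows from this formula: it vanishes at `α = β = ξ`; by `|ξ| = 1` and `⟨x,ξ⟩ = 0`
its values are tangent to `T𝕊^{n−1}`, and it fixes every tangent vector `(α, β)`; and it
vanishes only when `α` and `β` are multiples of `ξ`.
-/

namespace EuclideanSpace

lemma sum_smul_single_one {ι : Type*} [Fintype ι] [DecidableEq ι] (c : EuclideanSpace ℝ ι) :
    ∑ i, c i • EuclideanSpace.single i (1 : ℝ) = c := by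
  simpa using (basisFun ι ℝ).sum_repr c

lemma sum_smul_single_one_sub_smul {ι : Type*} [Fintype ι] [DecidableEq ι]
    (c ξ : EuclideanSpace ℝ ι) :
    ∑ i, c i • (EuclideanSpace.single i (1 : ℝ) - ξ i • ξ) = c - ⟪ξ, c⟫_ℝ • ξ := by
  simp only [smul_sub, Finset.sum_sub_distrib, sum_smul_single_one, smul_smul, ← Finset.sum_smul,
    PiLp.inner_apply, Real.inner_apply, mul_comm]

end EuclideanSpace

section TangentFrame

variable {n : ℕ}

lemma sum_smul_Xvec (x ξ c : E n) :
    ∑ i, c i • Xvec i x ξ = (c - ⟪ξ, c⟫_ℝ • ξ, 0) := by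
  simp only [Xvec, Prod.smul_mk, smul_zero, ← prod_mk_sum, Finset.sum_const_zero,
    EuclideanSpace.sum_smul_single_one_sub_smul]

lemma sum_smul_Ξvec (x ξ c : E n) :
    ∑ i, c i • Ξvec i x ξ = (-⟪x, c⟫_ℝ • ξ, c - ⟪ξ, c⟫_ℝ • ξ) := by
  simp only [Ξvec, Prod.smul_mk, ← prod_mk_sum, EuclideanSpace.sum_smul_single_one_sub_smul,
    smul_smul, ← Finset.sum_smul, PiLp.inner_apply, Real.inner_apply, neg_mul, Finset.sum_neg_distrib,
    mul_comm]

lemma sum_smul_Xvec_add_sum_smul_Ξvec (x ξ α β : E n) :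
    ∑ i, α i • Xvec i x ξ + ∑ i, β i • Ξvec i x ξ =
      (α - (⟪ξ, α⟫_ℝ + ⟪x, β⟫_ℝ) • ξ, β - ⟪ξ, β⟫_ℝ • ξ) := by
  rw [sum_smul_Xvec, sum_smul_Ξvec, Prod.mk_add_mk, zero_add]
  congr 1
  module

lemma eq_smul_of_sum_smul_Xvec_add_sum_smul_Ξvec_eq_zero {x ξ α β : E n}
    (h : ∑ i, α i • Xvec i x ξ + ∑ i, β i • Ξvec i x ξ = 0) :
    α = (⟪ξ, α⟫_ℝ + ⟪x, β⟫_ℝ) • ξ ∧ β = ⟪ξ, β⟫_ℝ • ξ := by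
  rwa [sum_smul_Xvec_add_sum_smul_Ξvec, Prod.mk_eq_zero, sub_eq_zero, sub_eq_zero] at h

lemma mem_span_Xvec_Ξvec_iff {x ξ : E n} {p : E n × E n} :
    p ∈ Submodule.span ℝ (Set.range (fun i => Xvec i x ξ) ∪ Set.range (fun i => Ξvec i x ξ)) ↔
      ∃ α β : E n, ∑ i, α i • Xvec i x ξ + ∑ i, β i • Ξvec i x ξ = p := by
  simp only [Submodule.span_union, Submodule.mem_sup, Submodule.mem_span_range_iff_exists_fun]
  constructor
  · rintro ⟨_, ⟨a, rfl⟩, _, ⟨b, rfl⟩, rfl⟩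
    exact ⟨WithLp.toLp 2 a, WithLp.toLp 2 b, rfl⟩
  · rintro ⟨α, β, rfl⟩
    exact ⟨_, ⟨α.ofLp, rfl⟩, _, ⟨β.ofLp, rfl⟩, rfl⟩

lemma exists_sum_smul_Xvec_add_sum_smul_Ξvec_eq_iff {x ξ : E n} (hξ : ⟪ξ, ξ⟫_ℝ = 1)
    (hxξ : ⟪x, ξ⟫_ℝ = 0) {p : E n × E n} :
    (∃ α β : E n, ∑ i, α i • Xvec i x ξ + ∑ i, β i • Ξvec i x ξ = p) ↔
      ⟪ξ, p.2⟫_ℝ = 0 ∧ ⟪ξ, p.1⟫_ℝ + ⟪x, p.2⟫_ℝ = 0 := by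
  simp only [sum_smul_Xvec_add_sum_smul_Ξvec]
  constructor
  · rintro ⟨α, β, rfl⟩
    simp only [inner_sub_right, inner_smul_right, hξ, hxξ]
    constructor <;> ring
  · rintro ⟨h₂, h₁⟩
    exact ⟨p.1, p.2, by simp [h₁, h₂]⟩

end TangentFrame

theorem stmt9_general {n : ℕ} (x ξ : E n) (hξ : ‖ξ‖ = 1) (hxξ : ⟪x, ξ⟫_ℝ = 0) :
    (∑ i, ξ i • Xvec i x ξ = 0 ∧ ∑ i, ξ i • Ξvec i x ξ = 0) ∧
    ((Submodule.span ℝ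
        (Set.range (fun i => Xvec i x ξ) ∪ Set.range (fun i => Ξvec i x ξ)) : Set (E n × E n)) =
      {p : E n × E n | ⟪ξ, p.2⟫_ℝ = 0 ∧ ⟪ξ, p.1⟫_ℝ + ⟪x, p.2⟫_ℝ = 0}) ∧
    (∀ α β : Fin n → ℝ,
      (∑ i, α i • Xvec i x ξ) + (∑ i, β i • Ξvec i x ξ) = 0 →
      ∃ α₀ β₀ : ℝ, (∀ i, α i = α₀ * ξ i) ∧ (∀ i, β i = β₀ * ξ i)) := by
  have hξξ : ⟪ξ, ξ⟫_ℝ = 1 := by simp [hξ]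
  refine ⟨⟨?_, ?_⟩, ?_, fun α β h => ?_⟩
  · simp only [sum_smul_Xvec, hξξ, one_smul, sub_self, Prod.mk_zero_zero]
  · simp only [sum_smul_Ξvec, hξξ, hxξ, one_smul, sub_self, neg_zero, zero_smul, Prod.mk_zero_zero]
  · ext p
    exact mem_span_Xvec_Ξvec_iff.trans (exists_sum_smul_Xvec_add_sum_smul_Ξvec_eq_iff hξξ hxξ)
  · obtain ⟨hα, hβ⟩ := eq_smul_of_sum_smul_Xvec_add_sum_smul_Ξvec_eq_zero
      (α := WithLp.toLp 2 α) (β := WithLp.toLp 2 β) h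
    exact ⟨_, _, fun i => congr($hα i), fun i => congr($hβ i)⟩

theorem stmt9 {n : ℕ} (hn : 2 ≤ n) (x ξ : E n) (hξ : ‖ξ‖ = 1) (hxξ : ⟪x, ξ⟫_ℝ = 0) :
    (∑ i, ξ i • Xvec i x ξ = 0 ∧ ∑ i, ξ i • Ξvec i x ξ = 0) ∧
    ((Submodule.span ℝ
        (Set.range (fun i => Xvec i x ξ) ∪ Set.range (fun i => Ξvec i x ξ)) : Set (E n × E n)) =
      {p : E n × E n | ⟪ξ, p.2⟫_ℝ = 0 ∧ ⟪ξ, p.1⟫_ℝ + ⟪x, p.2⟫_ℝ = 0}) ∧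
    (∀ α β : Fin n → ℝ,
      (∑ i, α i • Xvec i x ξ) + (∑ i, β i • Ξvec i x ξ) = 0 →
      ∃ α₀ β₀ : ℝ, (∀ i, α i = α₀ * ξ i) ∧ (∀ i, β i = β₀ * ξ i)) :=
  stmt9_general x ξ hξ hxξ
end
end
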